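/- arXiv:2302.02988 — 2 statements merged into one kernel-verified Lean document; each statement's English description precedes it below -/
import Mathlib

section
/- Let K ≥ 1 and let σ : Fin K → ℝ satisfy σ(a) > 0 for every a. (i) For every w : Fin K → ℝ with w(a) > 0 for all a and ∑_a w(a) = 1, there exists an arm a with σ(a)²/w(a) ≥ ∑_{b} σ(b)². (ii) The allocation w*(a) = σ(a)²/(∑_{b} σ(b)²) satisfies w*(a) > 0 for all a, ∑_a w*(a) = 1, and σ(a)²/w*(a) = ∑_{b} σ(b)² for every a. Consequently the minimum over the open probability simplex of max_a σ(a)²/w(a) equals ∑_{b} σ(b)², attained at w*. -/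
/-- Optimal target allocation for `K` arms: (i) for every `w` in the open
probability simplex some arm satisfies `σ a ^ 2 / w a ≥ ∑ b, σ b ^ 2`;
(ii) the allocation `w* a = σ a ^ 2 / ∑ b, σ b ^ 2` lies in the open probability
simplex and satisfies `σ a ^ 2 / w* a = ∑ b, σ b ^ 2` for every `a`; consequently
the minimum over the open probability simplex of `max_a σ a ^ 2 / w a` equals
`∑ b, σ b ^ 2`, attained at `w*`. -/
theorem stmt_2 (K : ℕ) (hK : 1 ≤ K) (σ : Fin K → ℝ) (hσ : ∀ a, 0 < σ a) :
    (∀ w : Fin K → ℝ, (∀ a, 0 < w a) → (∑ a, w a = 1) →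
      ∃ a, (∑ b, (σ b) ^ 2) ≤ (σ a) ^ 2 / w a) ∧
    (∀ a, 0 < (σ a) ^ 2 / ∑ b, (σ b) ^ 2) ∧
    (∑ a, (σ a) ^ 2 / ∑ b, (σ b) ^ 2) = 1 ∧
    (∀ a, (σ a) ^ 2 / ((σ a) ^ 2 / ∑ b, (σ b) ^ 2) = ∑ b, (σ b) ^ 2) ∧
    IsLeast {M : ℝ | ∃ w : Fin K → ℝ, (∀ a, 0 < w a) ∧ (∑ a, w a = 1) ∧
        M = (Finset.univ.sup' (Finset.univ_nonempty_iff.mpr ⟨⟨0, hK⟩⟩)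
          fun a => (σ a) ^ 2 / w a)} (∑ b, (σ b) ^ 2) := by
  have hne : (Finset.univ : Finset (Fin K)).Nonempty := ⟨⟨0, hK⟩, Finset.mem_univ _⟩
  have hS : 0 < ∑ b, (σ b) ^ 2 :=
    Finset.sum_pos (fun b _ => pow_pos (hσ b) 2) hne
  have key : ∀ w : Fin K → ℝ, (∀ a, 0 < w a) → (∑ a, w a = 1) →
      ∃ a, (∑ b, (σ b) ^ 2) ≤ (σ a) ^ 2 / w a := by
    intro w hw hsum
    by_contra h
    push_neg at h
    have : ∑ b, (σ b) ^ 2 < ∑ b, (σ b) ^ 2 := by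
      calc ∑ b, (σ b) ^ 2 = ∑ b, ((σ b) ^ 2 / w b) * w b := by
            refine Finset.sum_congr rfl fun b _ => ?_
            rw [div_mul_cancel₀ _ (hw b).ne']
        _ < ∑ b, (∑ c, (σ c) ^ 2) * w b := by
            refine Finset.sum_lt_sum_of_nonempty hne fun b _ => ?_
            exact mul_lt_mul_of_pos_right (h b) (hw b)
        _ = ∑ b, (σ b) ^ 2 := by
            rw [← Finset.mul_sum, hsum, mul_one]
    exact lt_irrefl _ this
  have heq : ∀ a : Fin K, (σ a) ^ 2 / ((σ a) ^ 2 / ∑ b, (σ b) ^ 2) = ∑ b, (σ b) ^ 2 := by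
    intro a
    rw [div_div_eq_mul_div, mul_comm, mul_div_assoc,
      div_self (pow_pos (hσ a) 2).ne', mul_one]
  refine ⟨key, fun a => div_pos (pow_pos (hσ a) 2) hS, ?_, heq, ?_, ?_⟩
  · rw [← Finset.sum_div, div_self hS.ne']
  · refine ⟨fun a => σ a ^ 2 / ∑ b, σ b ^ 2,
      fun a => div_pos (pow_pos (hσ a) 2) hS, ?_, ?_⟩
    · rw [← Finset.sum_div, div_self hS.ne']
    · symm
      apply le_antisymm
      · exact Finset.sup'_le _ _ fun a _ => (heq a).le
      · obtain ⟨a, ha⟩ := hne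
        exact le_trans (heq a).ge (Finset.le_sup' (fun a => σ a ^ 2 / (fun a => σ a ^ 2 / ∑ b, σ b ^ 2) a) ha)
  · rintro M ⟨w, hw, hsum, rfl⟩
    obtain ⟨a, ha⟩ := key w hw hsum
    exact le_trans ha (Finset.le_sup' (fun a => σ a ^ 2 / w a) (Finset.mem_univ a))
end

section
/- Let (X, 𝒜, μ) be a measure space, K ≥ 1, and let e : Fin K → ℝ be nonnegative with ∑_a e(a) = 1. Let σ : Fin K → X → ℝ be measurable and nonnegative in each coordinate, and let w : Fin K → X → ℝ be measurable with w(a)(x) > 0 for all a and x and ∑_a w(a)(x) = 1 for μ-almost every x. Then, with all integrals taken as (extended-real-valued) integrals of nonnegative measurable functions, ∑_a e(a) · ∫ σ(a)(x)²/w(a)(x) dμ(x) ≥ ∫ (∑_a √(e(a))·σ(a)(x))² dμ(x). -/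
open MeasureTheory

/-- Covariate-dependent weighted allocation lower bound: for prior weights `e`
on the arms and a context-dependent allocation `w` lying pointwise in the open
probability simplex (μ-a.e. summing to one),
`∑ a, e a * ∫⁻ σ a x ^ 2 / w a x dμ ≥ ∫⁻ (∑ a, √(e a) * σ a x) ^ 2 dμ`. -/
theorem stmt_5 {X : Type*} [MeasurableSpace X] (μ : Measure X) (K : ℕ) (hK : 1 ≤ K)
    (e : Fin K → ℝ) (he : ∀ a, 0 ≤ e a) (hesum : ∑ a, e a = 1)
    (σ : Fin K → X → ℝ) (hσm : ∀ a, Measurable (σ a)) (hσ : ∀ a x, 0 ≤ σ a x)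
    (w : Fin K → X → ℝ) (hwm : ∀ a, Measurable (w a)) (hw : ∀ a x, 0 < w a x)
    (hwsum : ∀ᵐ x ∂μ, ∑ a, w a x = 1) :
    ∫⁻ x, ENNReal.ofReal ((∑ a, Real.sqrt (e a) * σ a x) ^ 2) ∂μ ≤
      ∑ a, ENNReal.ofReal (e a) * ∫⁻ x, ENNReal.ofReal ((σ a x) ^ 2 / w a x) ∂μ := by
  have key : ∫⁻ x, ENNReal.ofReal ((∑ a, Real.sqrt (e a) * σ a x) ^ 2) ∂μ ≤
      ∫⁻ x, ENNReal.ofReal (∑ a, e a * ((σ a x) ^ 2 / w a x)) ∂μ := by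
    refine lintegral_mono_ae ?_
    filter_upwards [hwsum] with x hx
    apply ENNReal.ofReal_le_ofReal
    have cs := Finset.sum_mul_sq_le_sq_mul_sq Finset.univ
      (fun a => Real.sqrt (w a x)) (fun a => Real.sqrt (e a) * σ a x / Real.sqrt (w a x))
    have h1 : ∀ a : Fin K,
        Real.sqrt (w a x) * (Real.sqrt (e a) * σ a x / Real.sqrt (w a x)) =
        Real.sqrt (e a) * σ a x := by
      intro a
      have hne : Real.sqrt (w a x) ≠ 0 := ne_of_gt (Real.sqrt_pos.mpr (hw a x))
      field_simp
    have h2 : ∀ a : Fin K, Real.sqrt (w a x) ^ 2 = w a x := fun a =>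
      Real.sq_sqrt (hw a x).le
    have h3 : ∀ a : Fin K, (Real.sqrt (e a) * σ a x / Real.sqrt (w a x)) ^ 2 =
        e a * ((σ a x) ^ 2 / w a x) := by
      intro a
      rw [div_pow, mul_pow, Real.sq_sqrt (he a), Real.sq_sqrt (hw a x).le]
      ring
    simp only [h1, h2, h3] at cs
    calc (∑ a, Real.sqrt (e a) * σ a x) ^ 2
        ≤ (∑ a, w a x) * ∑ a, e a * ((σ a x) ^ 2 / w a x) := cs
      _ = ∑ a, e a * ((σ a x) ^ 2 / w a x) := by rw [hx, one_mul]
  refine key.trans (le_of_eq ?_)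
  have hmeas : ∀ a : Fin K, Measurable fun x => ENNReal.ofReal ((σ a x) ^ 2 / w a x) :=
    fun a => (((hσm a).pow_const 2).div (hwm a)).ennreal_ofReal
  calc ∫⁻ x, ENNReal.ofReal (∑ a, e a * ((σ a x) ^ 2 / w a x)) ∂μ
      = ∫⁻ x, ∑ a, ENNReal.ofReal (e a * ((σ a x) ^ 2 / w a x)) ∂μ := by
        congr 1; ext x
        rw [ENNReal.ofReal_sum_of_nonneg]
        intro a _
        exact mul_nonneg (he a) (div_nonneg (sq_nonneg _) (hw a x).le)
    _ = ∑ a, ∫⁻ x, ENNReal.ofReal (e a * ((σ a x) ^ 2 / w a x)) ∂μ := by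
        exact lintegral_finset_sum _ (fun a _ =>
          ((measurable_const.mul (((hσm a).pow_const 2).div (hwm a))).ennreal_ofReal))
    _ = ∑ a, ENNReal.ofReal (e a) * ∫⁻ x, ENNReal.ofReal ((σ a x) ^ 2 / w a x) ∂μ := by
        refine Finset.sum_congr rfl fun a _ => ?_
        rw [← lintegral_const_mul _ (hmeas a)]
        congr 1; ext x
        rw [ENNReal.ofReal_mul (he a)]
end
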